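/- Let G be an n×n real matrix with positive definite symmetric part, Q := −G⁻¹, S := (Q+Qᵀ)/2, and γ := det(2G)/det(G+Gᵀ). Let ρ(l) := (2π)⁻ⁿ det(G)⁻¹ ∫_{[0,2π)ⁿ} exp( Σ_{i,j} Q_{ij} √(l_i l_j) e^{𝕚(θ_i−θ_j)} ) dθ be the density formula with kernel G, and let ρ̄(l) := (2π)⁻ⁿ det((−S)⁻¹)⁻¹ ∫_{[0,2π)ⁿ} exp( Σ_{i,j} S_{ij} √(l_i l_j) e^{𝕚(θ_i−θ_j)} ) dθ be the density formula with the symmetric kernel (−S)⁻¹. Then for every l ∈ ℝ₊ⁿ, |ρ(l)| ≤ γ · ρ̄(l). -/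

import Mathlib

/-!
For `Q = -G⁻¹`, swapping `i` and `j` conjugates the phase sum `∑ᵢⱼ Qᵢⱼ √(lᵢ lⱼ) e^{𝕚(θᵢ-θⱼ)}`,
so the phase sum of the symmetric part `S` is the real part of that of `Q`. Hence the integrand
of `ρ̄` is exactly the modulus of the integrand of `ρ`, and the triangle inequality for integrals
gives `|ρ(l)| ≤ det(G)⁻¹ (2π)⁻ⁿ ∫ |…|`. Finally `-S = ½ G⁻¹ (G + Gᵀ) G⁻ᵀ`, so
`det(-S) = det(G + Gᵀ) / (2ⁿ det(G)²)` and `det(G)⁻¹ = γ det(-S)`.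
-/

open Matrix MeasureTheory

/-- The density formula for a 1-permanental vector with kernel `G`, where `Q = −G⁻¹`.
Note that for the symmetric kernel `(−S)⁻¹` (with `S = (Q+Qᵀ)/2`), `−((−S)⁻¹)⁻¹ = S` and
`det((−S)⁻¹)⁻¹ = det(−S)`, so `permDensity ((−S)⁻¹)` coincides with the formula `ρ̄` of the
statement. -/
noncomputable def permDensity {n : ℕ} (G : Matrix (Fin n) (Fin n) ℝ) (l : Fin n → ℝ) : ℂ :=
  (((2 * Real.pi)⁻¹ : ℝ) ^ n : ℝ) * ((G.det⁻¹ : ℝ) : ℂ) *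
    ∫ θ : Fin n → ℝ in Set.univ.pi fun _ : Fin n => Set.Ico (0 : ℝ) (2 * Real.pi),
      Complex.exp (∑ i, ∑ j, ((-(G⁻¹ i j) : ℝ) : ℂ) * ((Real.sqrt (l i * l j) : ℝ) : ℂ) *
        Complex.exp (Complex.I * (((θ i : ℝ) : ℂ) - ((θ j : ℝ) : ℂ))))

namespace Matrix

variable {ι : Type*} [Fintype ι] [DecidableEq ι]

theorem det_ne_zero_of_forall_dotProduct_mulVec_pos {M : Matrix ι ι ℝ}
    (hM : ∀ x : ι → ℝ, x ≠ 0 → 0 < x ⬝ᵥ M *ᵥ x) : M.det ≠ 0 := fun h => by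
  obtain ⟨v, hv, hMv⟩ := exists_mulVec_eq_zero_iff.2 h
  simpa [hMv] using hM v hv

/-- The segment `t ↦ (1 - t) • 1 + t • M` joins `1` to `M` through matrices with positive
quadratic form, so by the intermediate value theorem the determinant keeps the sign of `det 1`. -/
theorem det_pos_of_forall_dotProduct_mulVec_pos {M : Matrix ι ι ℝ}
    (hM : ∀ x : ι → ℝ, x ≠ 0 → 0 < x ⬝ᵥ M *ᵥ x) : 0 < M.det := by
  set path : ℝ → Matrix ι ι ℝ := fun t => (1 - t) • 1 + t • M
  have path_det_ne_zero : ∀ t ∈ Set.Icc (0 : ℝ) 1, (path t).det ≠ 0 := by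
    rintro t ⟨ht₀, ht₁⟩
    refine det_ne_zero_of_forall_dotProduct_mulVec_pos fun x hx => ?_
    have hxx : 0 < x ⬝ᵥ x := by
      simpa using dotProduct_self_star_pos_iff.2 hx
    simp only [path, add_mulVec, smul_mulVec, one_mulVec, dotProduct_add, dotProduct_smul,
      smul_eq_mul]
    rcases ht₁.lt_or_eq with ht₁ | rfl
    · nlinarith [hM x hx]
    · simpa using hM x hx
  by_contra! hneg
  obtain ⟨t, ht, hzero⟩ := intermediate_value_Icc' zero_le_one
    (Continuous.continuousOn (f := fun t => (path t).det) (by fun_prop))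
    (show (0 : ℝ) ∈ Set.Icc (path 1).det (path 0).det by simpa [path] using hneg)
  exact path_det_ne_zero t ht hzero

theorem det_add_transpose_pos {G : Matrix ι ι ℝ} (hG : ∀ x : ι → ℝ, x ≠ 0 → 0 < x ⬝ᵥ G *ᵥ x) :
    0 < (G + Gᵀ).det := by
  refine det_pos_of_forall_dotProduct_mulVec_pos fun x hx => ?_
  rw [add_mulVec, dotProduct_add, mulVec_transpose, dotProduct_comm x (x ᵥ* G),
    ← dotProduct_mulVec]
  linarith [hG x hx]

theorem det_inv_add_inv_transpose {G : Matrix ι ι ℝ} (hG : IsUnit G.det) :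
    (G⁻¹ + G⁻¹ᵀ).det = (G + Gᵀ).det / G.det ^ 2 := by
  have hGt : IsUnit Gᵀ.det := by rwa [det_transpose]
  have : G⁻¹ + G⁻¹ᵀ = G⁻¹ * (G + Gᵀ) * Gᵀ⁻¹ := by
    rw [mul_add, add_mul, nonsing_inv_mul G hG, mul_assoc, mul_nonsing_inv Gᵀ hGt, one_mul,
      mul_one, transpose_nonsing_inv, add_comm]
  rw [this, det_mul, det_mul, det_nonsing_inv, det_nonsing_inv, det_transpose,
    Ring.inverse_eq_inv']
  field_simp

end Matrix

section PhaseSum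

variable {ι : Type*} [Fintype ι]

noncomputable def phaseSum (Q : Matrix ι ι ℝ) (l θ : ι → ℝ) : ℂ :=
  ∑ i, ∑ j, ((Q i j : ℝ) : ℂ) * ((Real.sqrt (l i * l j) : ℝ) : ℂ) *
    Complex.exp (Complex.I * (((θ i : ℝ) : ℂ) - ((θ j : ℝ) : ℂ)))

theorem phaseSum_add (Q R : Matrix ι ι ℝ) (l θ : ι → ℝ) :
    phaseSum (Q + R) l θ = phaseSum Q l θ + phaseSum R l θ := by
  simp only [phaseSum, Matrix.add_apply, Complex.ofReal_add, add_mul, Finset.sum_add_distrib]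

theorem phaseSum_smul (c : ℝ) (Q : Matrix ι ι ℝ) (l θ : ι → ℝ) :
    phaseSum (c • Q) l θ = c * phaseSum Q l θ := by
  simp only [phaseSum, Finset.mul_sum, Matrix.smul_apply, smul_eq_mul, Complex.ofReal_mul,
    mul_assoc]

theorem phaseSum_transpose (Q : Matrix ι ι ℝ) (l θ : ι → ℝ) :
    phaseSum Qᵀ l θ = starRingEnd ℂ (phaseSum Q l θ) := by
  rw [phaseSum, phaseSum, Finset.sum_comm]
  simp only [map_sum, map_mul, Complex.conj_ofReal, ← Complex.exp_conj, map_sub, Complex.conj_I,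
    transpose_apply, mul_comm (l _) (l _)]
  refine Finset.sum_congr rfl fun i _ => Finset.sum_congr rfl fun j _ => ?_
  ring_nf

theorem phaseSum_symmPart (Q : Matrix ι ι ℝ) (l θ : ι → ℝ) :
    phaseSum ((1 / 2 : ℝ) • (Q + Qᵀ)) l θ = (phaseSum Q l θ).re := by
  rw [phaseSum_smul, phaseSum_add, phaseSum_transpose, Complex.add_conj]
  push_cast
  ring

end PhaseSum

theorem permDensity_eq_phaseSum {n : ℕ} (G : Matrix (Fin n) (Fin n) ℝ) (l : Fin n → ℝ) :
    permDensity G l = (((2 * Real.pi)⁻¹ : ℝ) ^ n : ℝ) * ((G.det⁻¹ : ℝ) : ℂ) *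
      ∫ θ : Fin n → ℝ in Set.univ.pi fun _ : Fin n => Set.Ico (0 : ℝ) (2 * Real.pi),
        Complex.exp (phaseSum (-G⁻¹) l θ) :=
  rfl

theorem norm_permDensity_le {n : ℕ} {G : Matrix (Fin n) (Fin n) ℝ} (hG : 0 < G.det)
    (l : Fin n → ℝ) :
    ‖permDensity G l‖ ≤ ((2 * Real.pi)⁻¹ : ℝ) ^ n * G.det⁻¹ *
      ∫ θ : Fin n → ℝ in Set.univ.pi fun _ : Fin n => Set.Ico (0 : ℝ) (2 * Real.pi),
        Real.exp (phaseSum (-G⁻¹) l θ).re := by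
  rw [permDensity_eq_phaseSum, norm_mul, norm_mul, Complex.norm_real, Complex.norm_real,
    Real.norm_of_nonneg (by positivity), Real.norm_of_nonneg (by positivity)]
  gcongr
  simpa only [Complex.norm_exp] using
    norm_integral_le_integral_norm fun θ => Complex.exp (phaseSum (-G⁻¹) l θ)

theorem permDensity_inv_neg_symmPart {n : ℕ} {Q S : Matrix (Fin n) (Fin n) ℝ}
    (hS : S = (1 / 2 : ℝ) • (Q + Qᵀ)) (hSu : IsUnit (-S).det) (l : Fin n → ℝ) :
    permDensity (-S)⁻¹ l = ((((2 * Real.pi)⁻¹ : ℝ) ^ n * (-S).det *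
      ∫ θ : Fin n → ℝ in Set.univ.pi fun _ : Fin n => Set.Ico (0 : ℝ) (2 * Real.pi),
        Real.exp (phaseSum Q l θ).re : ℝ) : ℂ) := by
  rw [permDensity_eq_phaseSum, nonsing_inv_nonsing_inv _ hSu, neg_neg, det_nonsing_inv,
    Ring.inverse_eq_inv', inv_inv]
  have hexp (θ : Fin n → ℝ) : phaseSum S l θ = (phaseSum Q l θ).re :=
    hS ▸ phaseSum_symmPart Q l θ
  simp only [hexp, ← Complex.ofReal_exp, integral_complex_ofReal]
  push_cast
  rfl

/-- **Symmetrization bound.** Let `G` have positive definite symmetric part,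
`Q := −G⁻¹`, `S := (Q+Qᵀ)/2`, `γ := det(2G)/det(G+Gᵀ)`. Let `ρ` be the density formula with
kernel `G` and `ρ̄` the density formula with the symmetric kernel `(−S)⁻¹`. Then
`|ρ(l)| ≤ γ·ρ̄(l)` for every `l ∈ ℝ₊ⁿ`. -/
theorem permDensity_symmetrization_bound {n : ℕ} (G : Matrix (Fin n) (Fin n) ℝ)
    (hpd : ∀ x : Fin n → ℝ, x ≠ 0 → 0 < x ⬝ᵥ G.mulVec x)
    (S : Matrix (Fin n) (Fin n) ℝ)
    (hS : S = (1 / 2 : ℝ) • ((-G⁻¹) + (-G⁻¹)ᵀ)) :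
    ∀ l : Fin n → ℝ, (∀ i, 0 ≤ l i) →
      ‖permDensity G l‖ ≤
        (((2 : ℝ) • G).det / (G + Gᵀ).det) * (permDensity (-S)⁻¹ l).re := by
  intro l _
  have hG : 0 < G.det := det_pos_of_forall_dotProduct_mulVec_pos hpd
  have hGGt : 0 < (G + Gᵀ).det := det_add_transpose_pos hpd
  have hdetS : (-S).det = (1 / 2 : ℝ) ^ n * ((G + Gᵀ).det / G.det ^ 2) := by
    rw [hS, transpose_neg, ← neg_add, smul_neg, neg_neg, det_smul,
      det_inv_add_inv_transpose hG.ne'.isUnit, Fintype.card_fin]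
  have hSu : IsUnit (-S).det := by
    rw [hdetS]
    exact (by positivity : (0 : ℝ) < _).ne'.isUnit
  rw [permDensity_inv_neg_symmPart hS hSu, Complex.ofReal_re]
  calc ‖permDensity G l‖ ≤ _ := norm_permDensity_le hG l
    _ = _ := by
      rw [hdetS, det_smul, Fintype.card_fin]
      field_simp
      rw [mul_assoc, ← mul_pow]
      norm_num
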